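/- Let k ≥ 1 be an integer and β(1),…,β(k) real numbers, with f as defined, and let s_r be the largest maximizer of f on {0,1,…,k}. If s_r ≤ k − 1, then the iterated integral A₂ = ∫₀^1 u_k^{β(k)} ( ∫₀^{u_k} u_{k−1}^{β(k−1)} ( ⋯ ( ∫₀^{u_{s_r+2}} u_{s_r+1}^{β(s_r+1)} du_{s_r+1} ) ⋯ ) du_{k−1} ) du_k is finite. -/

import Mathlib

open Finset Real MeasureTheory ENNReal

/-- `f k β s = -s + ∑_{i=s+1}^k β i`. -/
noncomputable def maxF (k : ℕ) (β : ℕ → ℝ) (s : ℕ) : ℝ :=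
  -(s : ℝ) + ∑ i ∈ Finset.Icc (s + 1) k, β i

/-- `nestIoo β n j b` is the iterated integral
`∫_0^b u_j^{β j} ( ∫_0^{u_j} u_{j-1}^{β (j-1)} ( ⋯ ) du_{j-1} ) du_j`
with `n` nested integrals (indices `j, j-1, …, j-n+1`), taken in `ℝ≥0∞`. -/
noncomputable def nestIoo (β : ℕ → ℝ) : ℕ → ℕ → ℝ → ℝ≥0∞
  | 0, _, _ => 1
  | n + 1, j, b => ∫⁻ u in Set.Ioo 0 b, ENNReal.ofReal (u ^ β j) * nestIoo β n (j - 1) u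

/-!
Since `s_r` is the largest maximizer of `f`, every partial sum
`f(s_r) - f(t) = ∑_{i=s_r+1}^t (β(i) + 1)` with `s_r < t ≤ k` is positive. Integrating from the
innermost variable outwards, the `n`-th partial integral is then a constant times
`u^{∑_{i=s_r+1}^{s_r+n} (β(i) + 1)}`, and the positivity of each exponent is exactly what makes
the next power `u^{β(s_r+n+1)}` times it integrable at `0`.
-/

lemma lintegral_Ioo_ofReal_rpow {p : ℝ} (hp : -1 < p) {b : ℝ} (hb : 0 ≤ b) :
    ∫⁻ u in Set.Ioo 0 b, ENNReal.ofReal (u ^ p) = ENNReal.ofReal (b ^ (p + 1) / (p + 1)) := by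
  rcases hb.eq_or_lt with rfl | hb
  · simp [Real.zero_rpow (by linarith : p + 1 ≠ 0)]
  rw [← ofReal_integral_eq_lintegral_ofReal]
  · rw [← integral_Ioc_eq_integral_Ioo, ← intervalIntegral.integral_of_le hb.le,
      integral_rpow (Or.inl hp), Real.zero_rpow (by linarith : p + 1 ≠ 0), sub_zero]
  · exact (intervalIntegral.intervalIntegrable_rpow' hp).1.mono_set Set.Ioo_subset_Ioc_self
  · filter_upwards [ae_restrict_mem measurableSet_Ioo] with u hu
    exact Real.rpow_nonneg hu.1.le p

lemma maxF_sub_maxF {k : ℕ} (β : ℕ → ℝ) {s t : ℕ} (hst : s ≤ t) (htk : t ≤ k) :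
    maxF k β s - maxF k β t = ∑ i ∈ Ioc s t, (β i + 1) := by
  simp only [maxF, Icc_add_one_left_eq_Ioc]
  rw [← sum_Ioc_consecutive _ hst htk, sum_add_distrib, sum_const, Nat.card_Ioc, nsmul_eq_mul,
    mul_one, Nat.cast_sub hst]
  ring

lemma sum_Ioc_pos_of_largest_maximizer {k : ℕ} {β : ℕ → ℝ} {sr : ℕ}
    (hmax : ∀ s ∈ range (k + 1), maxF k β s ≤ maxF k β sr)
    (htop : ∀ s ∈ range (k + 1), maxF k β s = maxF k β sr → s ≤ sr)
    {t : ℕ} (hsrt : sr < t) (htk : t ≤ k) :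
    0 < ∑ i ∈ Ioc sr t, (β i + 1) := by
  have ht : t ∈ range (k + 1) := mem_range_succ_iff.2 htk
  have hlt : maxF k β t < maxF k β sr :=
    (hmax t ht).lt_of_ne fun heq => (htop t ht heq).not_gt hsrt
  rw [← maxF_sub_maxF β hsrt.le htk]
  exact sub_pos.2 hlt

lemma nestIoo_eq_mul_rpow (β : ℕ → ℝ) (m : ℕ) :
    ∀ n, (∀ t, m < t → t ≤ m + n → 0 < ∑ i ∈ Ioc m t, (β i + 1)) →
      ∃ C : ℝ, 0 ≤ C ∧ ∀ b : ℝ, 0 ≤ b →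
        nestIoo β n (m + n) b = ENNReal.ofReal (C * b ^ ∑ i ∈ Ioc m (m + n), (β i + 1))
  | 0, _ => ⟨1, zero_le_one, fun b _ => by simp [nestIoo]⟩
  | n + 1, hpos => by
    obtain ⟨C, hC, hnest⟩ := nestIoo_eq_mul_rpow β m n fun t hmt htn => hpos t hmt (by omega)
    set E := ∑ i ∈ Ioc m (m + n), (β i + 1)
    set p := β (m + n + 1) + E
    have hsum : ∑ i ∈ Ioc m (m + (n + 1)), (β i + 1) = p + 1 := by
      rw [← add_assoc, sum_Ioc_succ_top (by omega)]
      ring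
    have hp : 0 < p + 1 := hsum ▸ hpos _ (by omega) le_rfl
    refine ⟨C / (p + 1), by positivity, fun b hb => ?_⟩
    have hintegrand : ∀ u ∈ Set.Ioo 0 b, ENNReal.ofReal (u ^ β (m + n + 1)) *
        nestIoo β n (m + n) u = ENNReal.ofReal C * ENNReal.ofReal (u ^ p) := fun u hu => by
      rw [hnest u hu.1.le, ← ofReal_mul (Real.rpow_nonneg hu.1.le _), ← ofReal_mul hC,
        Real.rpow_add hu.1]
      ring_nf
    calc nestIoo β (n + 1) (m + (n + 1)) b
        = ∫⁻ u in Set.Ioo 0 b,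
            ENNReal.ofReal (u ^ β (m + n + 1)) * nestIoo β n (m + n) u := by
          rw [← add_assoc, nestIoo, Nat.add_sub_cancel]
      _ = ENNReal.ofReal C * ENNReal.ofReal (b ^ (p + 1) / (p + 1)) := by
          rw [setLIntegral_congr_fun measurableSet_Ioo hintegrand,
            lintegral_const_mul' _ _ ofReal_ne_top, lintegral_Ioo_ofReal_rpow (by linarith) hb]
      _ = _ := by
          rw [← ofReal_mul hC, hsum]
          ring_nf

theorem second_integral_finite_general (k : ℕ) (β : ℕ → ℝ) (sr : ℕ)
    (hsrmem : sr ∈ Finset.range (k + 1))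
    (hsrmax : ∀ s ∈ Finset.range (k + 1), maxF k β s ≤ maxF k β sr)
    (hsrtop : ∀ s ∈ Finset.range (k + 1), maxF k β s = maxF k β sr → s ≤ sr) :
    nestIoo β (k - sr) k 1 < ⊤ := by
  have hsrk : sr ≤ k := mem_range_succ_iff.1 hsrmem
  obtain ⟨C, -, hnest⟩ := nestIoo_eq_mul_rpow β sr (k - sr) fun t hsrt htk =>
    sum_Ioc_pos_of_largest_maximizer hsrmax hsrtop hsrt (by omega)
  rw [Nat.add_sub_cancel' hsrk] at hnest
  rw [hnest 1 zero_le_one]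
  exact ofReal_lt_top

theorem second_integral_finite (k : ℕ) (hk : 1 ≤ k) (β : ℕ → ℝ) (sr : ℕ)
    (hsrmem : sr ∈ Finset.range (k + 1))
    (hsrmax : ∀ s ∈ Finset.range (k + 1), maxF k β s ≤ maxF k β sr)
    (hsrtop : ∀ s ∈ Finset.range (k + 1), maxF k β s = maxF k β sr → s ≤ sr)
    (hsrlt : sr ≤ k - 1) :
    nestIoo β (k - sr) k 1 < ⊤ :=
  second_integral_finite_general k β sr hsrmem hsrmax hsrtop
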